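/- Let q ≥ 5 be an odd prime power with q ≡ ξ (mod 3), ξ ∈ {1, -1}, and let μ ∈ F_q^* with μ ≠ 1 and μ ≠ 1/9. Set Δ(μ,γ) = 27(3γ²μ² - 4μ³ - 4γ⁴ - γ² + 6μγ²). Then the number of γ ∈ F_q such that the cubic t³ - 3γt² + 3μt - γ has exactly one root in F_q equals the number of γ ∈ F_q with η(-3Δ(μ,γ)) = -ξ. -/

import Mathlib

open scoped Classical

/-- The quadratic character of a field: `η a = 1` if `a` is a nonzero square,
`η a = -1` if `a` is a non-square, and `η 0 = 0`. -/
noncomputable def quadChar (F : Type*) [Field F] (a : F) : ℤ :=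
  if a = 0 then 0 else if IsSquare a then 1 else -1

/-!
Fix `γ`. If the cubic `f` has a root `r` in `F_q`, write `f = (t - r) g`; then
`disc f = disc g · g(r)²`, so `disc f` is a non-square exactly when `g` has no root in `F_q`,
i.e. when `r` is the only root (a triple root would force `μ = γ² ∈ {0, 1}`). If `f` has no
root in `F_q`, the Frobenius permutes its three roots `x, y, z` without fixed points, hence
cyclically, so it fixes `(x - y)(x - z)(y - z)`, which therefore lies in `F_q`: `disc f` is a
square. Finally `η(-3) = ξ`, since `-3 = (2ω + 1)²` for a primitive cube root of unity `ω`,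
which exists in `F_q` exactly when `3 ∣ q - 1`.
-/

open Polynomial

theorem isSquare_mul_sq_iff {F : Type*} [Field F] {a b : F} (hb : b ≠ 0) :
    IsSquare (a * b ^ 2) ↔ IsSquare a :=
  ⟨fun h ↦ by simpa [hb] using h.div (IsSquare.sq b), fun h ↦ h.mul (IsSquare.sq b)⟩

section Quadratic

variable {F : Type*} [Field F] {p s : F}

theorem exists_quadratic_eq_zero_iff_isSquare [NeZero (2 : F)] :
    (∃ t, t ^ 2 + p * t + s = 0) ↔ IsSquare (discrim 1 p s) := by
  constructor
  · rintro ⟨t, ht⟩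
    refine ⟨2 * t + p, ?_⟩
    rw [discrim_eq_sq_of_quadratic_eq_zero (x := t) (by linear_combination ht)]
    ring
  · rintro ⟨u, hu⟩
    obtain ⟨t, ht⟩ := exists_quadratic_eq_zero one_ne_zero ⟨u, hu⟩
    exact ⟨t, by linear_combination ht⟩

theorem quadratic_roots_subset_singleton_iff {r : F} :
    (∀ t, t ^ 2 + p * t + s = 0 → t = r) ↔
      (∀ t, t ^ 2 + p * t + s ≠ 0) ∨ (p = -2 * r ∧ s = r ^ 2) := by
  constructor
  · intro h
    by_contra! hcon
    obtain ⟨⟨t, ht⟩, hps⟩ := hcon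
    obtain rfl := h t ht
    have hp : p = -2 * t := by
      have := h (-p - t) (by linear_combination ht)
      linear_combination -this
    exact hps hp (by linear_combination ht - t * hp)
  · rintro (h | ⟨rfl, rfl⟩) t ht
    · exact absurd ht (h t)
    · exact sub_eq_zero.mp (pow_eq_zero_iff two_ne_zero |>.mp (by linear_combination ht))

end Quadratic

namespace FiniteField

variable {F K : Type*} [Field F] [Fintype F] [Field K] [Algebra F K] [FiniteDimensional F K]

theorem mem_range_algebraMap_of_pow_card_eq_self {x : K} (hx : x ^ Fintype.card F = x) :
    x ∈ Set.range (algebraMap F K) := by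
  have : Finite K := Module.finite_of_finite F
  refine (IsGalois.mem_range_algebraMap_iff_fixed x).mpr fun f ↦ ?_
  obtain ⟨n, rfl⟩ := (bijective_frobeniusAlgEquivOfAlgebraic_pow F K).2 f
  rw [AlgEquiv.coe_pow, coe_frobeniusAlgEquivOfAlgebraic]
  exact Function.iterate_fixed hx n

theorem natCast_ne_zero_of_coprime_card {m : ℕ} (h : m.Coprime (Fintype.card F)) :
    (m : F) ≠ 0 := fun hm ↦ by
  obtain ⟨n, hp, hcard⟩ := card F (ringChar F)
  exact hp.one_lt.ne' (Nat.eq_one_of_dvd_coprimes h (ringChar.dvd hm)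
    (hcard ▸ dvd_pow_self _ n.ne_zero))

theorem exists_pow_three_eq_one_ne_one_iff :
    (∃ ω : F, ω ^ 3 = 1 ∧ ω ≠ 1) ↔ Fintype.card F % 3 = 1 := by
  have : Fact (Nat.Prime 3) := ⟨Nat.prime_three⟩
  have hcard_pos : 0 < Fintype.card F := Fintype.card_pos
  constructor
  · rintro ⟨ω, h3, h1⟩
    have hω0 : ω ≠ 0 := by rintro rfl; simp at h3
    have hord : orderOf (Units.mk0 ω hω0) = 3 :=
      orderOf_eq_prime (Units.ext (by simpa using h3)) (by simpa [Units.ext_iff] using h1)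
    have := hord ▸ orderOf_dvd_card (x := Units.mk0 ω hω0)
    rw [Fintype.card_units] at this
    omega
  · intro h
    obtain ⟨u, hu⟩ := exists_prime_orderOf_dvd_card (G := Fˣ) 3
      (by rw [Fintype.card_units]; omega)
    refine ⟨u, ?_, fun hu1 ↦ ?_⟩
    · rw [← Units.val_pow_eq_pow_val, ← hu, pow_orderOf_eq_one, Units.val_one]
    · simp [Units.val_eq_one.mp hu1] at hu

theorem isSquare_neg_three_iff [NeZero (2 : F)] [NeZero (3 : F)] :
    IsSquare (-3 : F) ↔ Fintype.card F % 3 = 1 := by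
  have hdiscrim : discrim 1 1 1 = (-3 : F) := by norm_num [discrim]
  rw [← exists_pow_three_eq_one_ne_one_iff, ← hdiscrim,
    ← exists_quadratic_eq_zero_iff_isSquare]
  refine exists_congr fun ω ↦
    ⟨fun h ↦ ⟨?_, fun h1 ↦ three_ne_zero (α := F) ?_⟩, fun ⟨h3, h1⟩ ↦ ?_⟩
  · linear_combination (ω - 1) * h
  · linear_combination h - (ω + 2) * h1
  · have : (ω - 1) * (ω ^ 2 + 1 * ω + 1) = 0 := by linear_combination h3
    exact (mul_eq_zero.mp this).resolve_left (sub_ne_zero.mpr h1)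

theorem quadraticChar_neg_three [NeZero (2 : F)] [NeZero (3 : F)] {ξ : ℤ}
    (hξ : ξ = 1 ∨ ξ = -1) (hmod : (Fintype.card F : ℤ) ≡ ξ [ZMOD 3]) :
    quadraticChar F (-3) = ξ := by
  unfold Int.ModEq at hmod
  rcases hξ with rfl | rfl
  · exact (quadraticChar_one_iff_isSquare (neg_ne_zero.mpr three_ne_zero)).mpr
      (isSquare_neg_three_iff.mpr (by omega))
  · exact quadraticChar_neg_one_iff_not_isSquare.mpr
      (by rw [isSquare_neg_three_iff]; omega)

end FiniteField

theorem Set.eq_cycle_of_mapsTo_of_ne_self {α : Type*} {g : α → α} {x y z : α}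
    (hxy : x ≠ y) (hxz : x ≠ z) (hyz : y ≠ z)
    (hmaps : Set.MapsTo g {x, y, z} {x, y, z}) (hinj : Set.InjOn g {x, y, z})
    (hfree : ∀ w ∈ ({x, y, z} : Set α), g w ≠ w) :
    (g x = y ∧ g y = z ∧ g z = x) ∨ (g x = z ∧ g z = y ∧ g y = x) := by
  simp only [Set.MapsTo, Set.InjOn, Set.mem_insert_iff, Set.mem_singleton_iff] at *
  grind

namespace Cubic

variable {F : Type*} [Field F] [Fintype F]

theorem isSquare_discr_of_forall_ne_zero {P : Cubic F} (ha : P.a ≠ 0)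
    (hP : ∀ t, P.a * t ^ 3 + P.b * t ^ 2 + P.c * t + P.d ≠ 0) : IsSquare P.discr := by
  by_cases hd : P.discr = 0
  · exact hd ▸ IsSquare.zero
  let K := P.toPoly.SplittingField
  let σ := FiniteField.frobeniusAlgHom F K
  obtain ⟨x, y, z, h3⟩ := (splits_iff_roots_eq_three (φ := algebraMap F K) ha).mp
    (SplittingField.splits P.toPoly)
  obtain ⟨hxy, hxz, hyz⟩ := (discr_ne_zero_iff_roots_ne ha h3).mp hd
  have hroots (w : K) : w ∈ ({x, y, z} : Set K) ↔ algebraMap F K P.a * w ^ 3 +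
      algebraMap F K P.b * w ^ 2 + algebraMap F K P.c * w + algebraMap F K P.d = 0 := by
    have hmem : w ∈ ({x, y, z} : Set K) ↔ w ∈ (map (algebraMap F K) P).roots := by
      rw [h3]; simp
    exact hmem.trans (mem_roots_iff (ne_zero_of_a_ne_zero (by simpa [map] using ha)) w)
  have hmaps : Set.MapsTo σ {x, y, z} {x, y, z} := fun w hw ↦ by
    rw [hroots] at hw ⊢
    simpa only [map_add, map_mul, map_pow, σ.commutes, map_zero] using congrArg σ hw
  have hfree : ∀ w ∈ ({x, y, z} : Set K), σ w ≠ w := fun w hw hfix ↦ by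
    obtain ⟨t, rfl⟩ := FiniteField.mem_range_algebraMap_of_pow_card_eq_self hfix
    exact hP t ((algebraMap F K).injective (by simpa using (hroots _).mp hw))
  have hcycle := Set.eq_cycle_of_mapsTo_of_ne_self hxy hxz hyz hmaps σ.injective.injOn hfree
  set δ := algebraMap F K P.a * algebraMap F K P.a * (x - y) * (x - z) * (y - z)
  have hδ : σ δ = δ := by
    rcases hcycle with ⟨h1, h2, h3⟩ | ⟨h1, h2, h3⟩ <;>
      simp only [δ, map_mul, map_sub, σ.commutes, h1, h2, h3] <;> ring
  obtain ⟨s, hs⟩ := FiniteField.mem_range_algebraMap_of_pow_card_eq_self hδ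
  refine ⟨s, (algebraMap F K).injective ?_⟩
  rw [map_mul, hs, discr_eq_prod_three_roots ha h3, sq]

end Cubic

section MonicCubic

variable {F : Type*} [Field F] {b c d r : F}

theorem setOf_cubic_eq_zero_eq_singleton_iff (hr : r ^ 3 + b * r ^ 2 + c * r + d = 0) :
    {t : F | t ^ 3 + b * t ^ 2 + c * t + d = 0} = {r} ↔
      ∀ t, t ^ 2 + (r + b) * t + (r ^ 2 + b * r + c) = 0 → t = r := by
  have hfactor (t : F) : t ^ 3 + b * t ^ 2 + c * t + d =
      (t - r) * (t ^ 2 + (r + b) * t + (r ^ 2 + b * r + c)) := by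
    linear_combination hr
  simp only [Set.eq_singleton_iff_unique_mem, Set.mem_ofPred_eq, hfactor, mul_eq_zero,
    sub_eq_zero]
  grind

theorem Cubic.discr_eq_discrim_mul_sq (hr : r ^ 3 + b * r ^ 2 + c * r + d = 0) :
    (⟨1, b, c, d⟩ : Cubic F).discr =
      discrim 1 (r + b) (r ^ 2 + b * r + c) * (3 * r ^ 2 + 2 * b * r + c) ^ 2 := by
  simp only [Cubic.discr, discrim]
  -- `discr` is quadratic in `d`; divide its difference at `d` and at `d = -(r³ + b r² + c r)`
  -- by `d + r³ + b r² + c r`.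
  linear_combination (27 * (r ^ 3 + b * r ^ 2 + c * r) - 27 * d + 18 * b * c - 4 * b ^ 3) * hr

theorem not_isSquare_discr_iff [NeZero (2 : F)] (hr : r ^ 3 + b * r ^ 2 + c * r + d = 0) :
    ¬ IsSquare (⟨1, b, c, d⟩ : Cubic F).discr ↔
      ∀ t, t ^ 2 + (r + b) * t + (r ^ 2 + b * r + c) ≠ 0 := by
  rw [Cubic.discr_eq_discrim_mul_sq hr]
  constructor
  · intro h t ht
    exact h ((exists_quadratic_eq_zero_iff_isSquare.mp ⟨t, ht⟩).mul (IsSquare.sq _))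
  · intro h
    have hr' : 3 * r ^ 2 + 2 * b * r + c ≠ 0 := fun h0 ↦ h r (by linear_combination h0)
    rw [isSquare_mul_sq_iff hr', ← exists_quadratic_eq_zero_iff_isSquare]
    exact fun ⟨t, ht⟩ ↦ h t ht

theorem ncard_setOf_cubic_eq_zero_eq_one_iff [Fintype F] [NeZero (2 : F)] :
    {t : F | t ^ 3 + b * t ^ 2 + c * t + d = 0}.ncard = 1 ↔
      ¬ IsSquare (⟨1, b, c, d⟩ : Cubic F).discr ∨
        ∃ r, b = -3 * r ∧ c = 3 * r ^ 2 ∧ d = -r ^ 3 := by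
  constructor
  · intro h
    obtain ⟨r, hS⟩ := Set.ncard_eq_one.mp h
    have hr : r ^ 3 + b * r ^ 2 + c * r + d = 0 := (hS ▸ Set.mem_singleton r :)
    rcases quadratic_roots_subset_singleton_iff.mp
      ((setOf_cubic_eq_zero_eq_singleton_iff hr).mp hS) with hg | ⟨hb, hc⟩
    · exact .inl ((not_isSquare_discr_iff hr).mpr hg)
    · refine .inr ⟨r, by linear_combination hb, by linear_combination hc - r * hb, ?_⟩
      linear_combination hr - r * hc
  · rintro (h | ⟨r, rfl, rfl, rfl⟩)
    · obtain ⟨r, hr⟩ : ∃ r, r ^ 3 + b * r ^ 2 + c * r + d = 0 := by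
        by_contra! hno
        exact h (Cubic.isSquare_discr_of_forall_ne_zero one_ne_zero (by simpa using hno))
      rw [Set.ncard_eq_one]
      exact ⟨r, (setOf_cubic_eq_zero_eq_singleton_iff hr).mpr
        (quadratic_roots_subset_singleton_iff.mpr (.inl ((not_isSquare_discr_iff hr).mp h)))⟩
    · have hr : r ^ 3 + -3 * r * r ^ 2 + 3 * r ^ 2 * r + -r ^ 3 = 0 := by ring
      rw [Set.ncard_eq_one]
      exact ⟨r, (setOf_cubic_eq_zero_eq_singleton_iff hr).mpr
        (quadratic_roots_subset_singleton_iff.mpr (.inr ⟨by ring, by ring⟩))⟩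

end MonicCubic

theorem quadChar_eq_quadraticChar {F : Type*} [Field F] [Fintype F] (a : F) :
    quadChar F a = quadraticChar F a := by
  by_cases h : a = 0 <;> by_cases hsq : IsSquare a <;>
    simp [quadChar, quadraticChar_apply, quadraticCharFun, h, hsq]

theorem ncard_roots_eq_one_iff_not_isSquare {F : Type*} [Field F] [Fintype F] [NeZero (2 : F)]
    [NeZero (3 : F)] {μ : F} (hμ0 : μ ≠ 0) (hμ1 : μ ≠ 1) (γ : F) :
    {t : F | t ^ 3 - 3 * γ * t ^ 2 + 3 * μ * t - γ = 0}.ncard = 1 ↔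
      ¬ IsSquare
        (27 * (3 * γ ^ 2 * μ ^ 2 - 4 * μ ^ 3 - 4 * γ ^ 4 - γ ^ 2 + 6 * μ * γ ^ 2)) := by
  have hcubic : {t : F | t ^ 3 - 3 * γ * t ^ 2 + 3 * μ * t - γ = 0} =
      {t | t ^ 3 + -3 * γ * t ^ 2 + 3 * μ * t + -γ = 0} := by
    ext t; rw [Set.mem_ofPred_eq, Set.mem_ofPred_eq]; ring_nf
  have hdiscr : (⟨1, -3 * γ, 3 * μ, -γ⟩ : Cubic F).discr =
      27 * (3 * γ ^ 2 * μ ^ 2 - 4 * μ ^ 3 - 4 * γ ^ 4 - γ ^ 2 + 6 * μ * γ ^ 2) := by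
    simp only [Cubic.discr]; ring
  have hno_triple : ¬ ∃ r, -3 * γ = -3 * r ∧ 3 * μ = 3 * r ^ 2 ∧ -γ = -r ^ 3 := by
    rintro ⟨r, hb, hc, hd⟩
    obtain rfl : γ = r := by simpa [three_ne_zero] using hb
    obtain rfl : μ = γ ^ 2 := by simpa [three_ne_zero] using hc
    have : γ ^ 2 * (γ ^ 2 - 1) = 0 := by linear_combination γ * hd
    rcases mul_eq_zero.mp this with h | h
    · exact hμ0 h
    · exact hμ1 (sub_eq_zero.mp h)
  rw [hcubic, ncard_setOf_cubic_eq_zero_eq_one_iff, hdiscr, or_iff_left hno_triple]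

theorem stmt14 (q : ℕ) (hodd : Odd q)
    (ξ : ℤ) (hξ : ξ = 1 ∨ ξ = -1) (hmod : (q : ℤ) ≡ ξ [ZMOD 3])
    (F : Type*) [Field F] [Fintype F] (hcard : Fintype.card F = q)
    (μ : F) (hμ0 : μ ≠ 0) (hμ1 : μ ≠ 1) :
    Set.ncard {γ : F |
        ({t : F | t ^ 3 - 3 * γ * t ^ 2 + 3 * μ * t - γ = 0} : Set F).ncard = 1}
      = Set.ncard {γ : F |
          quadChar F (-3 * (27 * (3 * γ ^ 2 * μ ^ 2 - 4 * μ ^ 3 - 4 * γ ^ 4 - γ ^ 2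
            + 6 * μ * γ ^ 2))) = -ξ} := by
  subst hcard
  have h3_dvd : ¬ 3 ∣ Fintype.card F := by unfold Int.ModEq at hmod; omega
  have h2 : ((2 : ℕ) : F) ≠ 0 :=
    FiniteField.natCast_ne_zero_of_coprime_card (Nat.coprime_two_left.mpr hodd)
  have h3 : ((3 : ℕ) : F) ≠ 0 := FiniteField.natCast_ne_zero_of_coprime_card
    ((Nat.Prime.coprime_iff_not_dvd Nat.prime_three).mpr h3_dvd)
  have : NeZero (2 : F) := ⟨by exact_mod_cast h2⟩
  have : NeZero (3 : F) := ⟨by exact_mod_cast h3⟩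
  congr 1
  ext γ
  rw [Set.mem_ofPred_eq, Set.mem_ofPred_eq, ncard_roots_eq_one_iff_not_isSquare hμ0 hμ1,
    quadChar_eq_quadraticChar, map_mul, FiniteField.quadraticChar_neg_three hξ hmod,
    ← quadraticChar_neg_one_iff_not_isSquare]
  rcases hξ with rfl | rfl <;> omega
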